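/- arXiv:2312.17339 — 4 statements merged into one kernel-verified Lean document; each statement's English description precedes it below -/
import Mathlib

section
/- Inside the degree-2 homogeneous part of the polynomial ring ℂ[X_{ijk} : i,j,k ∈ {1,2}], the ℂ-linear span of all the 2×2 minors of the three flattenings of the 2×2×2 cube of variables (i.e., of all binomials X_{ijk}X_{i'j'k'} − X_{i'jk}X_{ij'k'}, X_{ijk}X_{i'j'k'} − X_{ij'k}X_{i'jk'}, X_{ijk}X_{i'j'k'} − X_{ijk'}X_{i'j'k} for i,i',j,j',k,k' ∈ {1,2}) has dimension exactly 9. -/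
/-!
Index the cube of variables by the Boolean lattice `Fin 2 × Fin 2 × Fin 2`. Swapping one
coordinate of a pair `a, b` preserves `a ⊓ b` and `a ⊔ b`, so every 2×2 minor of a flattening
is a difference of two Hibi relations `X a * X b - X (a ⊓ b) * X (a ⊔ b)`; conversely, since in
a product of three chains two coordinates of `a, b` are ordered the same way, every Hibi relation
is (up to sign) such a minor, or zero. Hibi relations of comparable pairs vanish, and those of
the incomparable pairs are linearly independent: evaluating at the indicator of `{a, b}` kills
every one of them except that of `s(a, b)`. So the dimension is the number of incomparable pairs
of the cube, which is 9.
-/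

open MvPolynomial Submodule Module

def incomparablePairs (α : Type*) [Preorder α] : Set (Sym2 α) :=
  Sym2.fromRel (r := IncompRel (α := α) (· ≤ ·)) inferInstance

instance (α : Type*) [Preorder α] [DecidableLE α] : DecidablePred (· ∈ incomparablePairs α) :=
  Sym2.fromRel.decidablePred _

theorem mk_mem_incomparablePairs {α : Type*} [Preorder α] {a b : α} :
    s(a, b) ∈ incomparablePairs α ↔ IncompRel (· ≤ ·) a b :=
  Sym2.fromRel_prop

theorem eq_of_le_of_mem_incomparablePairs {α : Type*} [Preorder α] {z : Sym2 α}
    (hz : z ∈ incomparablePairs α) {x y : α} (hx : x ∈ z) (hy : y ∈ z) (hxy : x ≤ y) : x = y := by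
  by_contra hne
  rw [(Sym2.mem_and_mem_iff hne).mp ⟨hx, hy⟩, mk_mem_incomparablePairs] at hz
  exact hz.not_le hxy

section Hibi

variable {α : Type*} [Lattice α] (R : Type*) [CommRing R]

noncomputable def hibiRelation : Sym2 α → MvPolynomial α R :=
  Sym2.lift ⟨fun a b => X a * X b - X (a ⊓ b) * X (a ⊔ b),
    fun a b => by dsimp only; rw [inf_comm, sup_comm, mul_comm (X b)]⟩

variable {R}

theorem hibiRelation_mk (a b : α) :
    hibiRelation R s(a, b) = X a * X b - X (a ⊓ b) * X (a ⊔ b) :=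
  rfl

theorem hibiRelation_of_le {a b : α} (h : a ≤ b) : hibiRelation R s(a, b) = 0 := by
  rw [hibiRelation_mk, inf_of_le_left h, sup_of_le_right h, sub_self]

theorem hibiRelation_eq_zero_of_notMem {z : Sym2 α} (hz : z ∉ incomparablePairs α) :
    hibiRelation R z = 0 := by
  induction z using Sym2.ind with
  | _ a b =>
    rw [mk_mem_incomparablePairs, not_incompRel_iff_symmGen] at hz
    rcases hz with hab | hba
    · exact hibiRelation_of_le hab
    · rw [Sym2.eq_swap, hibiRelation_of_le hba]

theorem X_mul_X_sub_X_mul_X_eq_hibiRelation_sub {a b c d : α} (hinf : a ⊓ b = c ⊓ d)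
    (hsup : a ⊔ b = c ⊔ d) :
    (X a * X b - X c * X d : MvPolynomial α R) =
      hibiRelation R s(a, b) - hibiRelation R s(c, d) := by
  rw [hibiRelation_mk, hibiRelation_mk, hinf, hsup]
  ring

theorem aeval_indicator_hibiRelation [DecidableEq α] {z w : Sym2 α}
    (hz : z ∈ incomparablePairs α) (hw : w ∈ incomparablePairs α) :
    aeval (fun v => if v ∈ w then (1 : R) else 0) (hibiRelation R z) = if w = z then 1 else 0 := by
  induction z using Sym2.ind with
  | _ a b =>
    have hab := mk_mem_incomparablePairs.mp hz
    have hchain : ¬ (a ⊓ b ∈ w ∧ a ⊔ b ∈ w) := fun ⟨hinf, hsup⟩ =>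
      hab.not_le <| le_sup_left.trans <|
        (eq_of_le_of_mem_incomparablePairs hw hinf hsup inf_le_sup).symm.le.trans inf_le_right
    have hpair := Sym2.mem_and_mem_iff hab.ne (z := w)
    simp only [hibiRelation_mk, map_sub, map_mul, aeval_X]
    split_ifs <;> simp_all

theorem linearIndepOn_hibiRelation :
    LinearIndepOn R (hibiRelation R) (incomparablePairs α) := by
  classical
  refine linearIndepOn_iff'.mpr fun t g ht hsum w hw => ?_
  have hcoeff : ∀ z ∈ t, aeval (fun v => if v ∈ w then (1 : R) else 0) (g z • hibiRelation R z) =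
      if w = z then g z else 0 := fun z hz => by
    rw [map_smul, aeval_indicator_hibiRelation (ht hz) (ht hw), smul_eq_mul, mul_ite, mul_one,
      mul_zero]
  have := congrArg (aeval fun v => if v ∈ w then (1 : R) else 0) hsum
  rwa [map_sum, Finset.sum_congr rfl hcoeff, Finset.sum_ite_eq, if_pos hw, map_zero] at this

theorem hibiRelation_mem_span (z : Sym2 α) :
    hibiRelation R z ∈ span R (hibiRelation R '' incomparablePairs α) := by
  by_cases hz : z ∈ incomparablePairs α
  · exact subset_span ⟨z, hz, rfl⟩
  · rw [hibiRelation_eq_zero_of_notMem hz]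
    exact zero_mem _

theorem finrank_span_hibiRelation [Nontrivial R] [Fintype (incomparablePairs α)] :
    finrank R (span R (hibiRelation R '' incomparablePairs α)) =
      Fintype.card (incomparablePairs α) := by
  rw [Set.image_eq_range, finrank_span_eq_card linearIndepOn_hibiRelation.linearIndependent]

end Hibi

section CubeMinors

variable (R : Type*) [CommRing R] (α β γ : Type*)

def cubeMinors : Set (MvPolynomial (α × β × γ) R) :=
  {f | ∃ (i i' : α) (j j' : β) (k k' : γ),
    f = X (i, j, k) * X (i', j', k') - X (i', j, k) * X (i, j', k') ∨
    f = X (i, j, k) * X (i', j', k') - X (i, j', k) * X (i', j, k') ∨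
    f = X (i, j, k) * X (i', j', k') - X (i, j, k') * X (i', j', k)}

variable {R α β γ}

theorem cubeMinors_subset_span_hibiRelation [Lattice α] [Lattice β] [Lattice γ] :
    cubeMinors R α β γ ⊆ span R (hibiRelation R '' incomparablePairs (α × β × γ)) := by
  rintro f ⟨i, i', j, j', k, k', rfl | rfl | rfl⟩ <;>
  · rw [X_mul_X_sub_X_mul_X_eq_hibiRelation_sub (by simp [inf_comm]) (by simp [sup_comm])]
    exact sub_mem (hibiRelation_mem_span _) (hibiRelation_mem_span _)

theorem hibiRelation_mem_span_cubeMinors [LinearOrder α] [LinearOrder β] [LinearOrder γ]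
    (z : Sym2 (α × β × γ)) : hibiRelation R z ∈ span R (cubeMinors R α β γ) := by
  induction z using Sym2.ind with
  | _ a b =>
    obtain ⟨a₁, a₂, a₃⟩ := a
    obtain ⟨b₁, b₂, b₃⟩ := b
    wlog h₁ : a₁ ≤ b₁ generalizing a₁ a₂ a₃ b₁ b₂ b₃
    · rw [Sym2.eq_swap]
      exact this b₁ b₂ b₃ a₁ a₂ a₃ (le_of_not_ge h₁)
    rcases le_total a₂ b₂ with h₂ | h₂ <;> rcases le_total a₃ b₃ with h₃ | h₃
    · rw [hibiRelation_of_le (Prod.mk_le_mk.mpr ⟨h₁, Prod.mk_le_mk.mpr ⟨h₂, h₃⟩⟩)]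
      exact zero_mem _
    · refine subset_span ⟨a₁, b₁, a₂, b₂, a₃, b₃, Or.inr <| Or.inr ?_⟩
      simp [hibiRelation_mk, h₁, h₂, h₃]
    · refine subset_span ⟨a₁, b₁, a₂, b₂, a₃, b₃, Or.inr <| Or.inl ?_⟩
      simp [hibiRelation_mk, h₁, h₂, h₃]
    · refine subset_span ⟨b₁, a₁, b₂, a₂, b₃, a₃, Or.inl ?_⟩
      simp [hibiRelation_mk, h₁, h₂, h₃, mul_comm]

theorem span_cubeMinors_eq_span_hibiRelation [LinearOrder α] [LinearOrder β] [LinearOrder γ] :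
    span R (cubeMinors R α β γ) = span R (hibiRelation R '' incomparablePairs (α × β × γ)) :=
  le_antisymm (span_le.mpr cubeMinors_subset_span_hibiRelation) <|
    span_le.mpr <| Set.image_subset_iff.mpr fun z _ => hibiRelation_mem_span_cubeMinors z

end CubeMinors

/-- The ℂ-linear span of the 2×2 minors of the three flattenings of the 2×2×2 cube of
variables `X (i, j, k)` (all of which are homogeneous of degree 2) has dimension
exactly 9: the nine linearly independent quadratic equations of the Segre embedding
`ℙ¹×ℙ¹×ℙ¹ ↪ ℙ⁷`. -/
theorem segre_P1P1P1_nine_equations :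
    Module.finrank ℂ
      (Submodule.span ℂ
        {f : MvPolynomial (Fin 2 × Fin 2 × Fin 2) ℂ | ∃ i i' j j' k k' : Fin 2,
          f = X (i, j, k) * X (i', j', k') - X (i', j, k) * X (i, j', k') ∨
          f = X (i, j, k) * X (i', j', k') - X (i, j', k) * X (i', j, k') ∨
          f = X (i, j, k) * X (i', j', k') - X (i, j, k') * X (i', j', k)}) = 9 := by
  change finrank ℂ (span ℂ (cubeMinors ℂ (Fin 2) (Fin 2) (Fin 2))) = 9
  rw [span_cubeMinors_eq_span_hibiRelation, finrank_span_hibiRelation]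
  decide
end

section
/- Let T : {1,2}×{1,2}×{1,2} → ℂ be a nonzero function (a 2×2×2 complex tensor). Then there exist x, y, z : {1,2} → ℂ with T(i,j,k) = x(i)·y(j)·z(k) for all i,j,k if and only if for all i,i',j,j',k,k' ∈ {1,2} the three families of 2×2 minor equations hold: T(i,j,k)T(i',j',k') = T(i',j,k)T(i,j',k'), T(i,j,k)T(i',j',k') = T(i,j',k)T(i',j,k'), and T(i,j,k)T(i',j',k') = T(i,j,k')T(i',j',k). -/
/-!
If the minors vanish and `T a b c ≠ 0`, every entry is recovered from the three lines of the
tensor through `(a, b, c)`: `T i j k * T a b c ^ 2 = T i b c * T a j c * T a b k`, obtained by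
changing the third index and then the first two, with one minor equation each.
-/

section

variable {ι κ μ : Type*}

theorem minors_eq_of_eq_mul_mul {R : Type*} [CommSemiring R] {T : ι → κ → μ → R}
    {x : ι → R} {y : κ → R} {z : μ → R} (hT : ∀ i j k, T i j k = x i * y j * z k)
    (i i' : ι) (j j' : κ) (k k' : μ) :
    T i j k * T i' j' k' = T i' j k * T i j' k' ∧
    T i j k * T i' j' k' = T i j' k * T i' j k' ∧
    T i j k * T i' j' k' = T i j k' * T i' j' k := by
  simp only [hT]
  exact ⟨by ring, by ring, by ring⟩

variable {K : Type*} [Field K] {T : ι → κ → μ → K}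

theorem eq_mul_mul_div_of_minors_eq
    (h₂ : ∀ i i' j j' k k', T i j k * T i' j' k' = T i j' k * T i' j k')
    (h₃ : ∀ i i' j j' k k', T i j k * T i' j' k' = T i j k' * T i' j' k)
    {a : ι} {b : κ} {c : μ} (habc : T a b c ≠ 0) (i : ι) (j : κ) (k : μ) :
    T i j k = T i b c * T a j c * (T a b k / T a b c ^ 2) := by
  rw [mul_div_assoc', eq_div_iff (pow_ne_zero 2 habc)]
  calc T i j k * T a b c ^ 2 = T i j c * T a b k * T a b c := by rw [h₃ i a j b c k]; ring
    _ = T a j c * T i b c * T a b k := by rw [h₂ a i j b c c]; ring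
    _ = T i b c * T a j c * T a b k := by ring

theorem exists_eq_mul_mul_of_minors_eq
    (h₂ : ∀ i i' j j' k k', T i j k * T i' j' k' = T i j' k * T i' j k')
    (h₃ : ∀ i i' j j' k k', T i j k * T i' j' k' = T i j k' * T i' j' k) :
    ∃ (x : ι → K) (y : κ → K) (z : μ → K), ∀ i j k, T i j k = x i * y j * z k := by
  by_cases hzero : ∀ i j k, T i j k = 0
  · exact ⟨0, 0, 0, fun i j k => by simp [hzero]⟩
  push Not at hzero
  obtain ⟨a, b, c, habc⟩ := hzero
  exact ⟨fun i => T i b c, fun j => T a j c, fun k => T a b k / T a b c ^ 2,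
    eq_mul_mul_div_of_minors_eq h₂ h₃ habc⟩

end

theorem segre_cone_tensor_decomposable_general
    (T : Fin 2 → Fin 2 → Fin 2 → ℂ) :
    (∃ x y z : Fin 2 → ℂ, ∀ i j k : Fin 2, T i j k = x i * y j * z k) ↔
    (∀ i i' j j' k k' : Fin 2,
      T i j k * T i' j' k' = T i' j k * T i j' k' ∧
      T i j k * T i' j' k' = T i j' k * T i' j k' ∧
      T i j k * T i' j' k' = T i j k' * T i' j' k) := by
  refine ⟨fun ⟨_, _, _, hT⟩ => minors_eq_of_eq_mul_mul hT, fun hminors => ?_⟩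
  exact exists_eq_mul_mul_of_minors_eq (fun i i' j j' k k' => (hminors i i' j j' k k').2.1)
    (fun i i' j j' k k' => (hminors i i' j j' k k').2.2)

/-- A nonzero 2×2×2 complex tensor is decomposable (`T i j k = x i * y j * z k`)
if and only if all 2×2 minors of its three flattenings vanish: the equations of the
affine cone over the Segre embedding `ℙ¹×ℙ¹×ℙ¹ ↪ ℙ⁷`. -/
theorem segre_cone_tensor_decomposable
    (T : Fin 2 → Fin 2 → Fin 2 → ℂ) (hT : T ≠ 0) :
    (∃ x y z : Fin 2 → ℂ, ∀ i j k : Fin 2, T i j k = x i * y j * z k) ↔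
    (∀ i i' j j' k k' : Fin 2,
      T i j k * T i' j' k' = T i' j k * T i j' k' ∧
      T i j k * T i' j' k' = T i j' k * T i' j k' ∧
      T i j k * T i' j' k' = T i j k' * T i' j' k) :=
  segre_cone_tensor_decomposable_general T
end

section
/- Let h(n) be the number of tuples (α₁,α₂,β₁,β₂,γ₁,γ₂) ∈ ℕ⁶ with α₁+α₂ = β₁+β₂ = γ₁+γ₂ and α₂ + β₂ + γ₁ + 2γ₂ = n (the counting function for the weights a = (0,1), b = (0,1), c = (1,2)). Then in the ring of formal power series over ℤ, (∑_{n≥0} h(n)tⁿ) · (1−t)(1−t²)³(1−t³)³(1−t⁴) = 1 − 3t⁴ − 3t⁵ − t⁶ + 6t⁷ + 6t⁸ − t⁹ − 3t¹⁰ − 3t¹¹ + t¹⁵. -/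
/-!
Write `d` for the common total degree and `α = (d - x, x)`, `β = (d - y, y)`, `γ = (d - z, z)`
with `x, y, z ≤ d`; the weighted degree is then `d + x + y + z`, so the Hilbert series is
`∑_d t^d (1 + t + ⋯ + t^d)^3`. Multiplying by `(1 - t)^3` turns the `d`-th term into
`t^d (1 - t^(d+1))^3`, and summing these over `d` gives
`1/(1 - t) - 3t/(1 - t²) + 3t²/(1 - t³) - t³/(1 - t⁴)`. Clearing denominators yields the
numerator.
-/

open PowerSeries Finset
open scoped PowerSeries.WithPiTopology

theorem hasSum_X_pow_mk_card {R T : Type*} [Semiring R] [TopologicalSpace R] (w : T → ℕ)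
    (hw : ∀ n, {t | w t = n}.Finite) :
    HasSum (fun t => (X : R⟦X⟧) ^ w t) (mk fun n => (Nat.card {t // w t = n} : R)) := by
  rw [WithPiTopology.hasSum_iff_hasSum_coeff]
  intro n
  have h : HasSum (fun t => coeff n ((X : R⟦X⟧) ^ w t))
      (∑ t ∈ (hw n).toFinset, coeff n ((X : R⟦X⟧) ^ w t)) :=
    hasSum_sum_of_ne_finset_zero fun t ht => by simp_all [coeff_X_pow, eq_comm]
  have hcard : Nat.card {t // w t = n} = (hw n).toFinset.card :=
    Nat.card_eq_card_finite_toFinset (hw n)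
  convert h using 1
  rw [coeff_mk, hcard, Finset.sum_congr rfl fun t ht => by
    rw [coeff_X_pow, if_pos ((hw n).mem_toFinset.1 ht).symm]]
  simp

theorem hasSum_pow_X_pow {R : Type*} [TopologicalSpace R] [Semiring R] {m : ℕ} (hm : m ≠ 0) :
    HasSum (fun i => ((X : R⟦X⟧) ^ m) ^ i) (∑' i, (X ^ m) ^ i) :=
  (WithPiTopology.summable_pow_of_constantCoeff_eq_zero (by simp [hm])).hasSum

theorem tsum_pow_X_pow_mul_one_sub_X_pow {R : Type*} [TopologicalSpace R] [Ring R]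
    [IsTopologicalRing R] [T2Space R] {m : ℕ} (hm : m ≠ 0) :
    (∑' i, ((X : R⟦X⟧) ^ m) ^ i) * (1 - X ^ m) = 1 :=
  WithPiTopology.tsum_pow_mul_one_sub_of_constantCoeff_eq_zero (by simp [hm])

abbrev ExponentTriple := (Fin 2 → ℕ) × (Fin 2 → ℕ) × (Fin 2 → ℕ)

def EqualDegrees (v : ExponentTriple) : Prop :=
  v.1 0 + v.1 1 = v.2.1 0 + v.2.1 1 ∧ v.2.1 0 + v.2.1 1 = v.2.2 0 + v.2.2 1

def weightedDegree (v : ExponentTriple) : ℕ :=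
  v.1 1 + v.2.1 1 + v.2.2 0 + 2 * v.2.2 1

noncomputable def hilbertSeries : ℤ⟦X⟧ :=
  mk fun n => (Nat.card {v : ExponentTriple //
    v.1 0 + v.1 1 = v.2.1 0 + v.2.1 1 ∧ v.2.1 0 + v.2.1 1 = v.2.2 0 + v.2.2 1 ∧
      weightedDegree v = n} : ℤ)

def antidiagonalPoint (d : ℕ) (i : Fin (d + 1)) : Fin 2 → ℕ := ![d - i, i]

theorem antidiagonalPoint_zero_add_one (d : ℕ) (i : Fin (d + 1)) :
    antidiagonalPoint d i 0 + antidiagonalPoint d i 1 = d := by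
  simp [antidiagonalPoint, Nat.sub_add_cancel (Fin.is_le i)]

abbrev Layers := Σ d : ℕ, Fin 3 → Fin (d + 1)

def ofLayers (p : Layers) : {v : ExponentTriple // EqualDegrees v} :=
  ⟨(antidiagonalPoint p.1 (p.2 0), antidiagonalPoint p.1 (p.2 1), antidiagonalPoint p.1 (p.2 2)),
    by simp only [EqualDegrees, antidiagonalPoint_zero_add_one, and_self]⟩

theorem ofLayers_bijective : Function.Bijective ofLayers := by
  constructor
  · rintro ⟨d, c⟩ ⟨d', c'⟩ h
    have hv := congrArg Subtype.val h
    simp only [ofLayers, Prod.mk.injEq] at hv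
    obtain ⟨h0, h1, h2⟩ := hv
    obtain rfl : d = d' := by
      simpa only [antidiagonalPoint_zero_add_one] using congrArg (fun x => x 0 + x 1) h2
    congr
    funext i
    fin_cases i
    exacts [Fin.ext (congrFun h0 1), Fin.ext (congrFun h1 1), Fin.ext (congrFun h2 1)]
  · rintro ⟨⟨α, β, γ⟩, hv⟩
    obtain ⟨hαβ, hβγ⟩ : α 0 + α 1 = β 0 + β 1 ∧ β 0 + β 1 = γ 0 + γ 1 := hv
    refine ⟨⟨γ 0 + γ 1, ![⟨α 1, by omega⟩, ⟨β 1, by omega⟩, ⟨γ 1, by omega⟩]⟩, ?_⟩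
    ext i <;> fin_cases i <;> simp [ofLayers, antidiagonalPoint] <;> omega

def layerDegree (p : Layers) : ℕ := p.1 + ∑ i, (p.2 i : ℕ)

theorem weightedDegree_ofLayers (p : Layers) :
    weightedDegree (ofLayers p).1 = layerDegree p := by
  obtain ⟨d, c⟩ := p
  have := (c 2).is_le
  simp only [weightedDegree, ofLayers, antidiagonalPoint, layerDegree, Fin.sum_univ_three,
    Matrix.cons_val_zero, Matrix.cons_val_one, Matrix.cons_val_fin_one]
  omega

theorem finite_layerDegree_fiber (n : ℕ) : {p | layerDegree p = n}.Finite := by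
  refine (Set.finite_range fun q : Σ d : Fin (n + 1), Fin 3 → Fin (d + 1) =>
    (⟨q.1, q.2⟩ : Layers)).subset ?_
  rintro ⟨d, c⟩ rfl
  exact ⟨⟨⟨d, by simp [layerDegree]⟩, c⟩, rfl⟩

theorem card_weightedDegree_fiber (n : ℕ) :
    Nat.card {v : ExponentTriple //
      v.1 0 + v.1 1 = v.2.1 0 + v.2.1 1 ∧ v.2.1 0 + v.2.1 1 = v.2.2 0 + v.2.2 1 ∧
        weightedDegree v = n} = Nat.card {p : Layers // layerDegree p = n} :=
  calc _ = Nat.card {v // EqualDegrees v ∧ weightedDegree v = n} :=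
        Nat.card_congr (Equiv.subtypeEquivRight fun _ => and_assoc.symm)
    _ = Nat.card {v : {v // EqualDegrees v} // weightedDegree v.1 = n} :=
        Nat.card_congr (Equiv.subtypeSubtypeEquivSubtypeInter _ _).symm
    _ = Nat.card {p : Layers // layerDegree p = n} :=
        Nat.card_congr ((Equiv.ofBijective _ ofLayers_bijective).subtypeEquiv fun p => by
          rw [Equiv.ofBijective_apply, weightedDegree_ofLayers]).symm

noncomputable def layerSeries (R : Type*) [CommSemiring R] (d : ℕ) : R⟦X⟧ :=
  X ^ d * (∑ i ∈ range (d + 1), X ^ i) ^ 3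

theorem sum_X_pow_layerDegree {R : Type*} [CommSemiring R] (d : ℕ) :
    ∑ c : Fin 3 → Fin (d + 1), (X : R⟦X⟧) ^ layerDegree ⟨d, c⟩ = layerSeries R d := by
  simp only [layerSeries, layerDegree, pow_add, ← mul_sum, ← prod_pow_eq_pow_sum]
  rw [← Fintype.prod_sum (fun _ (j : Fin (d + 1)) => (X : R⟦X⟧) ^ (j : ℕ)), prod_const,
    card_univ, Fintype.card_fin, Fin.sum_univ_eq_sum_range (X ^ ·)]

theorem hasSum_layerSeries_hilbertSeries : HasSum (layerSeries ℤ) hilbertSeries := by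
  have h := hasSum_X_pow_mk_card (R := ℤ) layerDegree finite_layerDegree_fiber
  simp_rw [← card_weightedDegree_fiber] at h
  exact h.sigma fun d => sum_X_pow_layerDegree (R := ℤ) d ▸ hasSum_fintype _

theorem layerSeries_mul_one_sub_X_pow_three {R : Type*} [CommRing R] (d : ℕ) :
    layerSeries R d * (1 - X) ^ 3 =
      (X ^ 1) ^ d - 3 * X * (X ^ 2) ^ d + 3 * X ^ 2 * (X ^ 3) ^ d - X ^ 3 * (X ^ 4) ^ d := by
  have hgeom : (∑ i ∈ range (d + 1), (X : R⟦X⟧) ^ i) * (1 - X) = 1 - X ^ (d + 1) := by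
    linear_combination -geom_sum_mul (X : R⟦X⟧) (d + 1)
  calc layerSeries R d * (1 - X) ^ 3
      = X ^ d * ((∑ i ∈ range (d + 1), X ^ i) * (1 - X)) ^ 3 := by rw [layerSeries]; ring
    _ = X ^ d * (1 - X ^ (d + 1)) ^ 3 := by rw [hgeom]
    _ = _ := by ring

theorem hasSum_layerSeries_mul_one_sub_X_pow_three {R : Type*} [CommRing R]
    [TopologicalSpace R] [IsTopologicalRing R] :
    HasSum (fun d => layerSeries R d * (1 - X) ^ 3)
      (∑' i, (X ^ 1) ^ i - 3 * X * ∑' i, (X ^ 2) ^ i + 3 * X ^ 2 * ∑' i, (X ^ 3) ^ i -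
        X ^ 3 * ∑' i, (X ^ 4) ^ i) := by
  simp_rw [layerSeries_mul_one_sub_X_pow_three]
  have hg {m : ℕ} (hm : m ≠ 0) := hasSum_pow_X_pow (R := R) hm
  exact (((hg one_ne_zero).sub ((hg two_ne_zero).mul_left (3 * X))).add
    ((hg three_ne_zero).mul_left (3 * X ^ 2))).sub ((hg four_ne_zero).mul_left (X ^ 3))

theorem hilbertSeries_mul_one_sub_X_pow_three :
    hilbertSeries * (1 - X) ^ 3 =
      ∑' i, (X ^ 1) ^ i - 3 * X * ∑' i, (X ^ 2) ^ i + 3 * X ^ 2 * ∑' i, (X ^ 3) ^ i -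
        X ^ 3 * ∑' i, (X ^ 4) ^ i :=
  (hasSum_layerSeries_hilbertSeries.mul_right _).unique hasSum_layerSeries_mul_one_sub_X_pow_three

/-- Hilbert series of the weighted `ℙ¹×ℙ¹×ℙ¹` variety with parameter
`μ = (0,1 : 0,1 : 1,2)` (Example 3.2), embedded in `ℙ(1,2³,3³,4)`: here
`h n` counts exponent tuples with equal total degrees and weighted degree
`α₂ + β₂ + γ₁ + 2γ₂ = n`, and `l = 5`. -/
theorem weighted_P1P1P1_example_hilbert_series :
    (PowerSeries.mk fun n : ℕ =>
        ((Nat.card {v : (Fin 2 → ℕ) × (Fin 2 → ℕ) × (Fin 2 → ℕ) //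
          v.1 0 + v.1 1 = v.2.1 0 + v.2.1 1 ∧
          v.2.1 0 + v.2.1 1 = v.2.2 0 + v.2.2 1 ∧
          v.1 1 + v.2.1 1 + v.2.2 0 + 2 * v.2.2 1 = n}) : ℤ)) *
      ((1 - PowerSeries.X) * (1 - PowerSeries.X ^ 2) ^ 3 *
        (1 - PowerSeries.X ^ 3) ^ 3 * (1 - PowerSeries.X ^ 4)) =
    1 - 3 * PowerSeries.X ^ 4 - 3 * PowerSeries.X ^ 5 - PowerSeries.X ^ 6 +
      6 * PowerSeries.X ^ 7 + 6 * PowerSeries.X ^ 8 - PowerSeries.X ^ 9 -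
      3 * PowerSeries.X ^ 10 - 3 * PowerSeries.X ^ 11 + PowerSeries.X ^ 15 := by
  change hilbertSeries * _ = _
  have e1 := tsum_pow_X_pow_mul_one_sub_X_pow (R := ℤ) one_ne_zero
  have e2 := tsum_pow_X_pow_mul_one_sub_X_pow (R := ℤ) two_ne_zero
  have e3 := tsum_pow_X_pow_mul_one_sub_X_pow (R := ℤ) three_ne_zero
  have e4 := tsum_pow_X_pow_mul_one_sub_X_pow (R := ℤ) four_ne_zero
  linear_combination ((1 - X) * (1 + X) ^ 3 * (1 - X ^ 3) ^ 3 * (1 - X ^ 4)) *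
      hilbertSeries_mul_one_sub_X_pow_three
    + ((1 + X) ^ 3 * (1 - X ^ 3) ^ 3 * (1 - X ^ 4)) * e1
    + (-3 * X * (1 + X) ^ 2 * (1 - X ^ 3) ^ 3 * (1 - X ^ 4)) * e2
    + (3 * X ^ 2 * (1 - X) * (1 + X) ^ 3 * (1 - X ^ 3) ^ 2 * (1 - X ^ 4)) * e3
    + (-X ^ 3 * (1 - X) * (1 + X) ^ 3 * (1 - X ^ 3) ^ 3) * e4
end

section
/- Let a₁,a₂,b₁,b₂,c₁,c₂ be integers such that aᵢ+bⱼ+cₖ > 0 for all i,j,k ∈ {1,2}, and set l = a₁+a₂+b₁+b₂+c₁+c₂. Define the rational function F(t) = N(t) / ∏_{i,j,k}(1 − t^{aᵢ+bⱼ+cₖ}), where N(t) = 1 − (3t^l + ∑_{i≠j}(t^{aᵢ−aⱼ+l} + t^{bᵢ−bⱼ+l} + t^{cᵢ−cⱼ+l})) + 2∑_{i,j,k} t^{aᵢ+bⱼ+cₖ+l} − (3t^{2l} + ∑_{i≠j}(t^{aᵢ−aⱼ+2l} + t^{bᵢ−bⱼ+2l} + t^{cᵢ−cⱼ+2l}))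 + t^{3l}. Then F satisfies the Gorenstein functional equation F(1/t) = t^l · F(t) in the field of rational functions; equivalently, the numerator is palindromic: t^{3l} · N(1/t) = N(t). -/
private lemma key_pow (e m : ℤ) (he : 0 ≤ e) (hm : e ≤ m) :
    (RatFunc.X : RatFunc ℚ) ^ m.toNat * (RatFunc.X⁻¹ : RatFunc ℚ) ^ e.toNat
      = RatFunc.X ^ (m - e).toNat := by
  have hX : (RatFunc.X : RatFunc ℚ) ≠ 0 := RatFunc.X_ne_zero
  have h : m.toNat = (m - e).toNat + e.toNat := by omega
  rw [h, pow_add, mul_assoc, inv_pow, mul_inv_cancel₀ (pow_ne_zero _ hX), mul_one]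

private lemma one_sub_ne (m : ℕ) (hm : m ≠ 0) : (1 - RatFunc.X ^ m : RatFunc ℚ) ≠ 0 := by
  have h0 : (Polynomial.X ^ m - Polynomial.C (1:ℚ)) ≠ 0 :=
    Polynomial.X_pow_sub_C_ne_zero (Nat.pos_of_ne_zero hm) 1
  have h2 : ((algebraMap (Polynomial ℚ) (RatFunc ℚ)) (Polynomial.X ^ m - Polynomial.C 1)) ≠ 0 :=
    RatFunc.algebraMap_ne_zero h0
  have h1 : (RatFunc.X : RatFunc ℚ) ^ m - 1 ≠ 0 := by
    simpa [map_sub, map_pow, RatFunc.algebraMap_X] using h2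
  intro h; exact h1 (by linear_combination -h)


/-- Gorenstein symmetry of the Hilbert series of the weighted `ℙ¹×ℙ¹×ℙ¹` variety:
with `N` the numerator and `F = N(t)/∏(1 − t^{aᵢ+bⱼ+cₖ})` the Hilbert series of
Proposition 3.1, one has `F(1/t) = t^l · F(t)` in the field of rational functions;
equivalently the numerator is palindromic: `t^{3l} · N(1/t) = N(t)`. -/
theorem weighted_P1P1P1_gorenstein_symmetry
    (a b c : Fin 2 → ℤ)
    (hpos : ∀ i j k : Fin 2, 0 < a i + b j + c k) :
    let l : ℤ := a 0 + a 1 + b 0 + b 1 + c 0 + c 1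
    let N : RatFunc ℚ → RatFunc ℚ := fun s =>
      1 - (3 * s ^ l.toNat
          + (∑ i, ∑ j, if i ≠ j then s ^ (a i - a j + l).toNat else 0)
          + (∑ i, ∑ j, if i ≠ j then s ^ (b i - b j + l).toNat else 0)
          + (∑ i, ∑ j, if i ≠ j then s ^ (c i - c j + l).toNat else 0))
        + 2 * (∑ p : Fin 2 × Fin 2 × Fin 2, s ^ (a p.1 + b p.2.1 + c p.2.2 + l).toNat)
        - (3 * s ^ (2 * l).toNat
          + (∑ i, ∑ j, if i ≠ j then s ^ (a i - a j + 2 * l).toNat else 0)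
          + (∑ i, ∑ j, if i ≠ j then s ^ (b i - b j + 2 * l).toNat else 0)
          + (∑ i, ∑ j, if i ≠ j then s ^ (c i - c j + 2 * l).toNat else 0))
        + s ^ (3 * l).toNat
    let F : RatFunc ℚ → RatFunc ℚ := fun s =>
      N s / ∏ p : Fin 2 × Fin 2 × Fin 2, (1 - s ^ (a p.1 + b p.2.1 + c p.2.2).toNat)
    F (RatFunc.X⁻¹) = RatFunc.X ^ l.toNat * F RatFunc.X ∧
      RatFunc.X ^ (3 * l).toNat * N (RatFunc.X⁻¹) = N RatFunc.X := by
  intro l N F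
  have hX : (RatFunc.X : RatFunc ℚ) ≠ 0 := RatFunc.X_ne_zero
  have hl : l = a 0 + a 1 + b 0 + b 1 + c 0 + c 1 := rfl
  have h000 := hpos 0 0 0
  have h001 := hpos 0 0 1
  have h010 := hpos 0 1 0
  have h011 := hpos 0 1 1
  have h100 := hpos 1 0 0
  have h101 := hpos 1 0 1
  have h110 := hpos 1 1 0
  have h111 := hpos 1 1 1
  have K : ∀ e e' : ℤ, 0 ≤ e → 0 ≤ e' → e + e' = 3 * l →
      (RatFunc.X : RatFunc ℚ) ^ (3*l).toNat * (RatFunc.X⁻¹ : RatFunc ℚ) ^ e.toNat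
        = RatFunc.X ^ e'.toNat := by
    intro e e' he he' h
    rw [key_pow e (3*l) he (by omega)]
    congr 1; omega
  have hN : RatFunc.X ^ (3 * l).toNat * N (RatFunc.X⁻¹) = N RatFunc.X := by
    simp only [N, Fintype.sum_prod_type, Fin.sum_univ_two]
    simp only [ne_eq, (by decide : ¬(0:Fin 2) = 1), (by decide : ¬(1:Fin 2) = 0),
      not_false_eq_true, if_true, eq_self_iff_true, not_true_eq_false, if_false,
      zero_add, add_zero]
    have kl := K l (2*l) (by omega) (by omega) (by ring)
    have kA1 := K (a 0 - a 1 + l) (a 1 - a 0 + 2*l) (by omega) (by omega) (by ring)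
    have kA2 := K (a 1 - a 0 + l) (a 0 - a 1 + 2*l) (by omega) (by omega) (by ring)
    have kB1 := K (b 0 - b 1 + l) (b 1 - b 0 + 2*l) (by omega) (by omega) (by ring)
    have kB2 := K (b 1 - b 0 + l) (b 0 - b 1 + 2*l) (by omega) (by omega) (by ring)
    have kC1 := K (c 0 - c 1 + l) (c 1 - c 0 + 2*l) (by omega) (by omega) (by ring)
    have kC2 := K (c 1 - c 0 + l) (c 0 - c 1 + 2*l) (by omega) (by omega) (by ring)
    have kP1 := K (a 0 + b 0 + c 0 + l) (a 1 + b 1 + c 1 + l) (by omega) (by omega) (by omega)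
    have kP2 := K (a 0 + b 0 + c 1 + l) (a 1 + b 1 + c 0 + l) (by omega) (by omega) (by omega)
    have kP3 := K (a 0 + b 1 + c 0 + l) (a 1 + b 0 + c 1 + l) (by omega) (by omega) (by omega)
    have kP4 := K (a 0 + b 1 + c 1 + l) (a 1 + b 0 + c 0 + l) (by omega) (by omega) (by omega)
    have kP5 := K (a 1 + b 0 + c 0 + l) (a 0 + b 1 + c 1 + l) (by omega) (by omega) (by omega)
    have kP6 := K (a 1 + b 0 + c 1 + l) (a 0 + b 1 + c 0 + l) (by omega) (by omega) (by omega)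
    have kP7 := K (a 1 + b 1 + c 0 + l) (a 0 + b 0 + c 1 + l) (by omega) (by omega) (by omega)
    have kP8 := K (a 1 + b 1 + c 1 + l) (a 0 + b 0 + c 0 + l) (by omega) (by omega) (by omega)
    have k2l := K (2*l) l (by omega) (by omega) (by ring)
    have kA3 := K (a 0 - a 1 + 2*l) (a 1 - a 0 + l) (by omega) (by omega) (by ring)
    have kA4 := K (a 1 - a 0 + 2*l) (a 0 - a 1 + l) (by omega) (by omega) (by ring)
    have kB3 := K (b 0 - b 1 + 2*l) (b 1 - b 0 + l) (by omega) (by omega) (by ring)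
    have kB4 := K (b 1 - b 0 + 2*l) (b 0 - b 1 + l) (by omega) (by omega) (by ring)
    have kC3 := K (c 0 - c 1 + 2*l) (c 1 - c 0 + l) (by omega) (by omega) (by ring)
    have kC4 := K (c 1 - c 0 + 2*l) (c 0 - c 1 + l) (by omega) (by omega) (by ring)
    have k3 : (RatFunc.X : RatFunc ℚ) ^ (3*l).toNat * (RatFunc.X⁻¹ : RatFunc ℚ) ^ (3*l).toNat
        = 1 := by
      rw [inv_pow, mul_inv_cancel₀ (pow_ne_zero _ hX)]
    linear_combination (-3 : RatFunc ℚ) * kl - kA1 - kA2 - kB1 - kB2 - kC1 - kC2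
      + 2 * (kP1 + kP2 + kP3 + kP4 + kP5 + kP6 + kP7 + kP8)
      - 3 * k2l - kA3 - kA4 - kB3 - kB4 - kC3 - kC4 + k3
  refine ⟨?_, hN⟩
  have hd0 : ∀ p : Fin 2 × Fin 2 × Fin 2, (a p.1 + b p.2.1 + c p.2.2).toNat ≠ 0 := by
    intro p; have := hpos p.1 p.2.1 p.2.2; omega
  have hDX : (∏ p : Fin 2 × Fin 2 × Fin 2,
      (1 - RatFunc.X ^ (a p.1 + b p.2.1 + c p.2.2).toNat) : RatFunc ℚ) ≠ 0 :=
    Finset.prod_ne_zero_iff.mpr (fun p _ => one_sub_ne _ (hd0 p))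
  have hsum : (4*l).toNat = ∑ p : Fin 2 × Fin 2 × Fin 2, (a p.1 + b p.2.1 + c p.2.2).toNat := by
    simp only [Fintype.sum_prod_type, Fin.sum_univ_two]
    omega
  have hD : (RatFunc.X : RatFunc ℚ) ^ (4*l).toNat *
      (∏ p : Fin 2 × Fin 2 × Fin 2, (1 - RatFunc.X⁻¹ ^ (a p.1 + b p.2.1 + c p.2.2).toNat))
      = ∏ p : Fin 2 × Fin 2 × Fin 2, (1 - RatFunc.X ^ (a p.1 + b p.2.1 + c p.2.2).toNat) := by
    rw [hsum, ← Finset.prod_pow_eq_pow_sum, ← Finset.prod_mul_distrib]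
    have step : ∀ p ∈ (Finset.univ : Finset (Fin 2 × Fin 2 × Fin 2)),
        (RatFunc.X : RatFunc ℚ) ^ (a p.1 + b p.2.1 + c p.2.2).toNat *
          (1 - RatFunc.X⁻¹ ^ (a p.1 + b p.2.1 + c p.2.2).toNat)
        = (-1) * (1 - RatFunc.X ^ (a p.1 + b p.2.1 + c p.2.2).toNat) := by
      intro p _
      have h1 : (RatFunc.X : RatFunc ℚ) ^ (a p.1 + b p.2.1 + c p.2.2).toNat *
          (RatFunc.X⁻¹) ^ (a p.1 + b p.2.1 + c p.2.2).toNat = 1 := by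
        rw [inv_pow, mul_inv_cancel₀ (pow_ne_zero _ hX)]
      linear_combination -h1
    rw [Finset.prod_congr rfl step, Finset.prod_mul_distrib, Finset.prod_const]
    norm_num
  have hDinv : (∏ p : Fin 2 × Fin 2 × Fin 2,
      ((1:RatFunc ℚ) - RatFunc.X⁻¹ ^ (a p.1 + b p.2.1 + c p.2.2).toNat)) ≠ 0 := by
    intro h0; exact hDX (by rw [← hD, h0, mul_zero])
  have h4 : (RatFunc.X : RatFunc ℚ) ^ (3*l).toNat * RatFunc.X ^ l.toNat
      = RatFunc.X ^ (4*l).toNat := by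
    rw [← pow_add]; congr 1; omega
  have goal' : N RatFunc.X⁻¹ *
      (∏ p : Fin 2 × Fin 2 × Fin 2, (1 - RatFunc.X ^ (a p.1 + b p.2.1 + c p.2.2).toNat))
      = RatFunc.X ^ l.toNat * N RatFunc.X *
      (∏ p : Fin 2 × Fin 2 × Fin 2, (1 - RatFunc.X⁻¹ ^ (a p.1 + b p.2.1 + c p.2.2).toNat)) := by
    apply mul_left_cancel₀ (pow_ne_zero (3*l).toNat hX)
    linear_combination
      (∏ p : Fin 2 × Fin 2 × Fin 2, (1 - RatFunc.X ^ (a p.1 + b p.2.1 + c p.2.2).toNat)) * hN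
      - (N RatFunc.X) * hD
      - (N RatFunc.X *
          (∏ p : Fin 2 × Fin 2 × Fin 2,
            (1 - RatFunc.X⁻¹ ^ (a p.1 + b p.2.1 + c p.2.2).toNat))) * h4
  show N RatFunc.X⁻¹ / _ = RatFunc.X ^ l.toNat * (N RatFunc.X / _)
  rw [mul_div_assoc', div_eq_div_iff hDinv hDX]
  exact goal'
end
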